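/- Let F be a field of characteristic 2 satisfying conditions Π_k and Π_{n−k}, where k is odd and n is even. If A is a k×(n−k) matrix over F such that the block matrix (I_k | A) is not an LCED matrix, then the sum of the entries on every row of A equals 1 and the sum of the entries on every column of A equals 1. -/

import Mathlib

open Matrix

/-- The permutation matrix of `σ`: the `(i, j)` entry is `1` if `σ j = i` and `0` otherwise. -/
def permMat (F : Type*) [Zero F] [One F] {n : Type*} [DecidableEq n]
    (σ : Equiv.Perm n) : Matrix n n F :=
  Matrix.of fun i j => if σ j = i then 1 else 0

/-- A matrix `G` over a field is an LCED matrix if there is a permutation matrix `P`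
such that `G * P * Gᵀ` is invertible. -/
def IsLCEDMatrix {F : Type*} [Field F] {k n : Type*} [Fintype k] [Fintype n]
    [DecidableEq k] [DecidableEq n] (G : Matrix k n F) : Prop :=
  ∃ σ : Equiv.Perm n, IsUnit (G * permMat F σ * Gᵀ)

/-- A field `F` satisfies condition `Π_k` if every symmetric `k × k` matrix `M` such that
`-1` is an eigenvalue of `P * M` for every permutation matrix `P` has the sum of all of
its entries equal to `-k`. -/
def PiCond (F : Type*) [Field F] (k : ℕ) : Prop :=
  ∀ M : Matrix (Fin k) (Fin k) F, M.IsSymm →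
    (∀ σ : Equiv.Perm (Fin k), ((1 : Matrix (Fin k) (Fin k) F) + permMat F σ * M).det = 0) →
    ∑ i, ∑ j, M i j = -(k : F)

/-! Restricted to block permutations `σ ⊕ τ`, `(I | A) P (I | A)ᵀ = P_σ + A P_τ Aᵀ`, so if `(I | A)`
is not LCED then `det (1 + P_σ A P_τ Aᵀ) = 0` for all `σ, τ`. For an involution `τ` the matrix
`A P_τ Aᵀ` is symmetric, and `Π_k` says that its entry sum `c ⬝ᵥ (c ∘ τ)`, where `c` is the vector
of column sums of `A`, equals `-k = 1`. Comparing `τ = 1` with a transposition `(a b)` gives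
`(c a - c b)² = 0`, so `c` is constant, and `m c² = 1` with `m` odd forces `c = 1` in
characteristic 2. The row sums are the column sums of `Aᵀ`, and Sylvester's identity
`det (1 + XY) = det (1 + YX)` transfers the hypothesis to `Aᵀ`, where `Π_m` applies. -/

section PermMat

variable {R n : Type*} [DecidableEq n]

lemma permMat_eq_permMatrix_inv [Zero R] [One R] (σ : Equiv.Perm n) :
    permMat R σ = σ⁻¹.permMatrix R := by
  ext i j
  simp [permMat, Equiv.toPEquiv_apply, Equiv.Perm.inv_def, Equiv.eq_symm_apply, eq_comm]

lemma transpose_permMat [Zero R] [One R] (σ : Equiv.Perm n) :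
    (permMat R σ)ᵀ = permMat R σ⁻¹ := by
  simp [permMat_eq_permMatrix_inv]

lemma permMat_one [Zero R] [One R] : permMat R (1 : Equiv.Perm n) = 1 := by
  simp [permMat_eq_permMatrix_inv]

variable [Fintype n]

lemma permMat_mul_permMat [NonAssocSemiring R] (σ τ : Equiv.Perm n) :
    permMat R σ * permMat R τ = permMat R (σ * τ) := by
  simp [permMat_eq_permMatrix_inv]

lemma isUnit_det_permMat [CommRing R] (σ : Equiv.Perm n) : IsUnit (permMat R σ).det := by
  rw [permMat_eq_permMatrix_inv, det_permutation]
  exact (Equiv.Perm.sign σ⁻¹).isUnit.map (Int.castRingHom R)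

lemma permMat_mulVec [CommRing R] (σ : Equiv.Perm n) (v : n → R) :
    permMat R σ *ᵥ v = v ∘ σ.symm := by
  rw [permMat_eq_permMatrix_inv, permMatrix_mulVec]
  rfl

end PermMat

lemma permMat_sumCongr {R k m : Type*} [Zero R] [One R] [DecidableEq k] [DecidableEq m]
    (σ : Equiv.Perm k) (τ : Equiv.Perm m) :
    permMat R (Equiv.sumCongr σ τ) = fromBlocks (permMat R σ) 0 0 (permMat R τ) := by
  ext (i | i) (j | j) <;> simp [permMat]

section Determinants

variable {R k m : Type*} [CommRing R] [Fintype k] [Fintype m] [DecidableEq k] [DecidableEq m]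

lemma fromCols_one_mul_permMat_sumCongr_mul_transpose (A : Matrix k m R)
    (σ : Equiv.Perm k) (τ : Equiv.Perm m) :
    fromCols (1 : Matrix k k R) A * permMat R (Equiv.sumCongr σ τ) *
        (fromCols (1 : Matrix k k R) A)ᵀ = permMat R σ + A * permMat R τ * Aᵀ := by
  rw [permMat_sumCongr, transpose_fromCols, transpose_one, fromCols_mul_fromBlocks,
    fromCols_mul_fromRows]
  simp

lemma det_one_add_permMat_mul_eq_zero {σ : Equiv.Perm k} {M : Matrix k k R}
    (h : (permMat R σ⁻¹ + M).det = 0) : (1 + permMat R σ * M).det = 0 := by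
  have hfac : permMat R σ⁻¹ + M = permMat R σ⁻¹ * (1 + permMat R σ * M) := by
    rw [Matrix.mul_add, Matrix.mul_one, ← Matrix.mul_assoc, permMat_mul_permMat, inv_mul_cancel,
      permMat_one, Matrix.one_mul]
  rwa [hfac, det_mul, (isUnit_det_permMat σ⁻¹).mul_right_eq_zero] at h

lemma det_one_add_mul_mul_mul_comm (X : Matrix k k R) (Y : Matrix m m R) (A : Matrix k m R)
    (B : Matrix m k R) : (1 + X * (A * Y * B)).det = (1 + Y * (B * X * A)).det := by
  rw [← Matrix.mul_assoc, det_one_add_mul_comm, ← Matrix.mul_assoc, ← Matrix.mul_assoc,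
    det_one_add_mul_comm, Matrix.mul_assoc B]

end Determinants

lemma sum_sum_mul_mul_transpose {R k m : Type*} [CommRing R] [Fintype k] [Fintype m]
    (A : Matrix k m R) (B : Matrix m m R) :
    ∑ i, ∑ j, (A * B * Aᵀ) i j = (1 ᵥ* A) ⬝ᵥ (B *ᵥ (1 ᵥ* A)) := by
  calc ∑ i, ∑ j, (A * B * Aᵀ) i j = 1 ⬝ᵥ ((A * B * Aᵀ) *ᵥ 1) := by
        simp only [dotProduct, mulVec, Pi.one_apply, one_mul, mul_one]
    _ = (1 ᵥ* A) ⬝ᵥ (B *ᵥ (1 ᵥ* A)) := by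
        rw [← mulVec_mulVec, ← mulVec_mulVec, dotProduct_mulVec, mulVec_transpose]

lemma dotProduct_comp_swap_sub_dotProduct {R ι : Type*} [CommRing R] [Fintype ι] [DecidableEq ι]
    (c : ι → R) {a b : ι} (hab : a ≠ b) :
    c ⬝ᵥ (c ∘ Equiv.swap a b) - c ⬝ᵥ c = -(c a - c b) ^ 2 := by
  rw [dotProduct, dotProduct, ← Finset.sum_sub_distrib,
    Fintype.sum_eq_add a b hab fun j hj => by simp [Equiv.swap_apply_of_ne_of_ne hj.1 hj.2]]
  simp only [Function.comp_apply, Equiv.swap_apply_left, Equiv.swap_apply_right]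
  ring

lemma eq_one_of_dotProduct_comp_swap_eq_one {R ι : Type*} [CommRing R] [NoZeroDivisors R]
    [CharP R 2] [Fintype ι] [DecidableEq ι] (hι : Odd (Fintype.card ι)) {c : ι → R}
    (h : ∀ a b, c ⬝ᵥ (c ∘ Equiv.swap a b) = 1) (j : ι) : c j = 1 := by
  have hself : c ⬝ᵥ c = 1 := by simpa using h j j
  have hconst : ∀ a, c a = c j := fun a => by
    by_cases haj : a = j
    · rw [haj]
    have hsq : (c a - c j) ^ 2 = 0 := by
      simpa [h a j, hself] using dotProduct_comp_swap_sub_dotProduct c haj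
    exact sub_eq_zero.mp (pow_eq_zero_iff two_ne_zero |>.mp hsq)
  have hsq : c j ^ 2 = 1 ^ 2 :=
    calc c j ^ 2 = ∑ a, c a * c a := by
          rw [Finset.sum_congr rfl fun a _ => by rw [hconst a], Finset.sum_const, Finset.card_univ,
            nsmul_eq_mul, CharTwo.natCast_eq_ite, if_neg (Nat.not_even_iff_odd.mpr hι)]
          ring
      _ = 1 ^ 2 := by rw [← dotProduct, hself, one_pow]
  exact CharTwo.sq_inj.mp hsq

lemma colSums_eq_one_of_det_one_add_eq_zero {F : Type*} [Field F] [CharP F 2] {k m : ℕ}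
    (hk : Odd k) (hm : Odd m) (hPi : PiCond F k) (A : Matrix (Fin k) (Fin m) F)
    (hdet : ∀ (σ : Equiv.Perm (Fin k)) (τ : Equiv.Perm (Fin m)),
      ((1 : Matrix (Fin k) (Fin k) F) + permMat F σ * (A * permMat F τ * Aᵀ)).det = 0)
    (j : Fin m) :
    ∑ i, A i j = 1 := by
  have hcolSum : ∑ i, A i j = (1 ᵥ* A) j := by simp [vecMul, dotProduct]
  rw [hcolSum]
  refine eq_one_of_dotProduct_comp_swap_eq_one (by simpa using hm) (fun a b => ?_) j
  have hsymm : (A * permMat F (Equiv.swap a b) * Aᵀ).IsSymm := by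
    rw [IsSymm, transpose_mul, transpose_mul, transpose_transpose, transpose_permMat,
      Equiv.swap_inv, Matrix.mul_assoc]
  have hsum := hPi _ hsymm fun σ => hdet σ _
  rwa [sum_sum_mul_mul_transpose, permMat_mulVec, Equiv.symm_swap,
    CharTwo.natCast_eq_ite, if_neg (Nat.not_even_iff_odd.mpr hk), CharTwo.neg_eq] at hsum

/-- in characteristic 2, with `k` odd and `n = k + (n-k)` even, if `F`
satisfies `Π_k` and `Π_{n-k}` and `(I_k | A)` is not an LCED matrix, then every row and
every column of `A` sums to `1`. -/
theorem stmt12 {F : Type*} [Field F] [CharP F 2] {k m : ℕ} (hk : Odd k)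
    (hn : Even (k + m)) (hPik : PiCond F k) (hPim : PiCond F m)
    (A : Matrix (Fin k) (Fin m) F)
    (h : ¬ IsLCEDMatrix (fromCols (1 : Matrix (Fin k) (Fin k) F) A)) :
    (∀ i, ∑ j, A i j = 1) ∧ (∀ j, ∑ i, A i j = 1) := by
  have hm : Odd m := by
    rwa [← Nat.not_even_iff_odd, ← Nat.even_add.mp hn, Nat.not_even_iff_odd]
  have hdet : ∀ (σ : Equiv.Perm (Fin k)) (τ : Equiv.Perm (Fin m)),
      ((1 : Matrix (Fin k) (Fin k) F) + permMat F σ * (A * permMat F τ * Aᵀ)).det = 0 :=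
    fun σ τ => det_one_add_permMat_mul_eq_zero <| by
      rw [← fromCols_one_mul_permMat_sumCongr_mul_transpose, ← not_ne_iff, ← isUnit_iff_ne_zero,
        ← isUnit_iff_isUnit_det]
      exact fun hunit => h ⟨_, hunit⟩
  refine ⟨fun i => ?_, colSums_eq_one_of_det_one_add_eq_zero hk hm hPik A hdet⟩
  simpa using colSums_eq_one_of_det_one_add_eq_zero hm hk hPim Aᵀ (fun τ σ => by
    rw [transpose_transpose, ← det_one_add_mul_mul_mul_comm]
    exact hdet σ τ) i
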